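/- arXiv:2507.22807 — 4 statements merged into one kernel-verified Lean document; each statement's English description precedes it below -/
import Mathlib

section
/- Let G be a graph on n vertices with minimum degree at least (1/2+γ)d, partitioned as V(G) = V₀ ∪ V₁ ∪ … ∪ V_{2K} with |V_i| ≤ n/(2K) for all 1 ≤ i ≤ 2K and (1+γ/10)(d/n)|V₀| ≤ γd/4. Suppose a vertex v has at most (1+γ/10)(d/n)|V_i| neighbors in each V_i (0 ≤ i ≤ 2K). Then v has at least γd/(10K) neighbors in at least (1+γ/10)K of the sets V₁,…,V_{2K}. -/
open Finset
open scoped Classical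
noncomputable section

theorem stmt_10 {V : Type*} [Fintype V] (G : SimpleGraph V) (n d K : ℕ) (γ : ℝ)
    (hn : Fintype.card V = n) (hd : 0 < d) (hK : 0 < K)
    (hγ0 : 0 < γ) (hγ : γ < 1 / 2)
    (P : Fin (2 * K + 1) → Finset V)
    (hdisj : ∀ i j, i ≠ j → Disjoint (P i) (P j))
    (hcover : ∀ v : V, ∃ i, v ∈ P i)
    (hsize : ∀ i : Fin (2 * K + 1), i ≠ 0 → ((P i).card : ℝ) ≤ (n : ℝ) / (2 * K))
    (hV0 : (1 + γ / 10) * ((d : ℝ) / n) * ((P 0).card : ℝ) ≤ γ * d / 4)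
    (hmin : ∀ v : V, (1 / 2 + γ) * (d : ℝ) ≤ (G.degree v : ℝ))
    (v : V)
    (hv : ∀ i, ((G.neighborFinset v ∩ P i).card : ℝ)
      ≤ (1 + γ / 10) * ((d : ℝ) / n) * ((P i).card : ℝ)) :
    (1 + γ / 10) * K ≤
      ((Finset.univ.filter (fun i : Fin (2 * K + 1) =>
        i ≠ 0 ∧ γ * (d : ℝ) / (10 * K) ≤ ((G.neighborFinset v ∩ P i).card : ℝ))).card : ℝ) := by
  by_contra hcon
  push_neg at hcon
  have hn0 : 0 < n := by
    rw [← hn]; exact Fintype.card_pos_iff.mpr ⟨v⟩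
  have hnR : (0:ℝ) < n := by exact_mod_cast hn0
  have hKR : (0:ℝ) < K := by exact_mod_cast hK
  have hdR : (0:ℝ) < d := by exact_mod_cast hd
  set A := G.neighborFinset v with hA
  set f : Fin (2*K+1) → ℝ := fun i => ((A ∩ P i).card : ℝ) with hf
  -- total degree is the sum over parts
  have hcardsum : (A.card : ℝ) = ∑ i, f i := by
    have hun : A = Finset.univ.biUnion (fun i => A ∩ P i) := by
      ext x
      simp only [Finset.mem_biUnion, Finset.mem_inter, Finset.mem_univ, true_and]
      constructor
      · intro hx; obtain ⟨i, hi⟩ := hcover x; exact ⟨i, hx, hi⟩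
      · rintro ⟨i, hx, _⟩; exact hx
    have : A.card = ∑ i, (A ∩ P i).card := by
      conv_lhs => rw [hun]
      rw [Finset.card_biUnion]
      intro i _ j _ hij
      exact Finset.disjoint_left.mpr fun x hx hx' =>
        (Finset.disjoint_left.mp (hdisj i j hij)) (Finset.mem_inter.mp hx).2
          (Finset.mem_inter.mp hx').2
    rw [this]; push_cast; rfl
  set q : Fin (2*K+1) → Prop := fun i => γ * (d:ℝ) / (10 * K) ≤ f i with hq
  set S := (Finset.univ.erase (0 : Fin (2*K+1))).filter q with hS
  set T := (Finset.univ.erase (0 : Fin (2*K+1))).filter (fun i => ¬ q i) with hT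
  -- split the sum
  have hsplit : ∑ i, f i = f 0 + (∑ i ∈ S, f i + ∑ i ∈ T, f i) := by
    rw [hS, hT, Finset.sum_filter_add_sum_filter_not,
      Finset.add_sum_erase _ f (Finset.mem_univ 0)]
  -- S is the filter set in the statement
  have hSeq : S = Finset.univ.filter (fun i : Fin (2*K+1) =>
      i ≠ 0 ∧ γ * (d:ℝ) / (10 * K) ≤ ((G.neighborFinset v ∩ P i).card : ℝ)) := by
    ext i
    simp [hS, Finset.mem_erase, Finset.mem_filter, and_comm, hq, hf, hA]
  have hScard : (S.card : ℝ) < (1 + γ/10) * K := by rw [hSeq]; exact hcon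
  -- bound on f 0
  have h0 : f 0 ≤ γ * d / 4 := le_trans (hv 0) hV0
  -- bound on each S term
  have hB : ∀ i ∈ S, f i ≤ (1 + γ/10) * d / (2 * K) := by
    intro i hi
    have hi0 : i ≠ 0 := (Finset.mem_erase.mp (Finset.mem_filter.mp hi).1).1
    have h1 : f i ≤ (1 + γ/10) * ((d:ℝ)/n) * ((P i).card) := hv i
    have hc : (0:ℝ) ≤ (1 + γ/10) * ((d:ℝ)/n) := by positivity
    have h2 : (1 + γ/10) * ((d:ℝ)/n) * ((P i).card)
        ≤ (1 + γ/10) * ((d:ℝ)/n) * ((n:ℝ)/(2*K)) :=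
      mul_le_mul_of_nonneg_left (hsize i hi0) hc
    have h3 : (1 + γ/10) * ((d:ℝ)/n) * ((n:ℝ)/(2*K)) = (1 + γ/10) * d / (2 * K) := by
      field_simp
    linarith
  have hSsum : ∑ i ∈ S, f i ≤ (S.card : ℝ) * ((1 + γ/10) * d / (2 * K)) := by
    calc ∑ i ∈ S, f i ≤ S.card • ((1 + γ/10) * d / (2 * K)) :=
          Finset.sum_le_card_nsmul _ _ _ hB
      _ = (S.card : ℝ) * ((1 + γ/10) * d / (2 * K)) := by rw [nsmul_eq_mul]
  have hTsum : ∑ i ∈ T, f i ≤ (T.card : ℝ) * (γ * d / (10 * K)) := by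
    calc ∑ i ∈ T, f i ≤ T.card • (γ * d / (10 * K)) := by
          apply Finset.sum_le_card_nsmul
          intro i hi
          have := (Finset.mem_filter.mp hi).2
          exact le_of_lt (lt_of_not_ge this)
      _ = (T.card : ℝ) * (γ * d / (10 * K)) := by rw [nsmul_eq_mul]
  have hTcard : (T.card : ℝ) ≤ 2 * K := by
    have h1 : T ⊆ Finset.univ.erase (0 : Fin (2*K+1)) := Finset.filter_subset _ _
    have h2 : T.card ≤ 2 * K := by
      have := Finset.card_le_card h1
      have he : (Finset.univ.erase (0 : Fin (2*K+1))).card = 2 * K := by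
        rw [Finset.card_erase_of_mem (Finset.mem_univ _)]
        simp
      omega
    exact_mod_cast h2
  have hBnn : (0:ℝ) ≤ (1 + γ/10) * d / (2 * K) := by positivity
  have hCnn : (0:ℝ) ≤ γ * d / (10 * K) := by positivity
  have hS2 : (S.card : ℝ) * ((1 + γ/10) * d / (2 * K))
      ≤ (1 + γ/10) * K * ((1 + γ/10) * d / (2 * K)) :=
    mul_le_mul_of_nonneg_right (le_of_lt hScard) hBnn
  have hT2 : (T.card : ℝ) * (γ * d / (10 * K)) ≤ 2 * K * (γ * d / (10 * K)) :=
    mul_le_mul_of_nonneg_right hTcard hCnn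
  have hdeg : (1/2 + γ) * (d:ℝ) ≤ (A.card : ℝ) := by
    rw [hA, G.card_neighborFinset_eq_degree]; exact hmin v
  have hkey : γ * d / 4 + (1 + γ/10) * K * ((1 + γ/10) * d / (2 * K))
      + 2 * K * (γ * d / (10 * K)) < (1/2 + γ) * d := by
    have h1 : (1 + γ/10) * K * ((1 + γ/10) * d / (2 * K)) = (1 + γ/10)^2 * d / 2 := by
      field_simp
    have h2 : 2 * K * (γ * d / (10 * K)) = γ * d / 5 := by
      field_simp; ring
    rw [h1, h2]
    nlinarith [mul_pos hγ0 hdR, mul_pos (mul_pos hγ0 hγ0) hdR]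
  rw [hcardsum, hsplit] at hdeg
  linarith
end
end

section
/- Let D ≥ 3 and m ≥ 1 be integers, G a bipartite graph with parts V₁, V₂, and H ⊆ G a subgraph with Δ(H) ≤ D. Suppose there exist x ∈ V(H) and y ∈ N_G(x) ∖ V(H) such that H + xy is (D,m)-bipartite-extendable. Then H is (D,m)-bipartite-extendable. -/
/-!
Adding the pendant edge `xy` to `H` puts the new vertex `y` into `V(H)` with degree one, so `y`
contributes nothing to the excess `Σ_{v ∈ U ∩ V(H)} (d_H(v) − 1)`, while the excess grows by one
exactly when `x ∈ U`. In that case `y ∉ U`, because `U` lies in one part of the bipartition, so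
`y` is an external neighbour of `U` outside `V(H)` that `H + xy` no longer counts: the right-hand
side also drops by one for `H + xy`, and the inequality for `H + xy` gives the one for `H`.
-/

open Finset
open scoped Classical
noncomputable section

/-- The external neighborhood of `U` in `G`: vertices outside `U` with a neighbor in `U`. -/
def extNbhd {V : Type*} [Fintype V] (G : SimpleGraph V) (U : Finset V) : Finset V :=
  Finset.univ.filter (fun v => v ∉ U ∧ ∃ u ∈ U, G.Adj u v)

/-- The vertex set `V(H)` of a subgraph `H`, i.e. the vertices incident to an edge of `H`. -/
def supportF {V : Type*} [Fintype V] (H : SimpleGraph V) : Finset V :=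
  Finset.univ.filter (fun v => ∃ u, H.Adj v u)

/-- `H` is `(D,m)`-bipartite-extendable in `G` with parts `V₁, V₂`:
`Δ(H) ≤ D` and for every `U ⊆ Vᵢ` with `|U| ≤ 2m`,
`|N_G(U) ∖ V(H)| ≥ (D−1)|U| − Σ_{x ∈ U ∩ V(H)} (d_H(x) − 1)`. -/
def BipExtendable {V : Type*} [Fintype V] (G H : SimpleGraph V) (V₁ V₂ : Finset V)
    (D m : ℕ) : Prop :=
  (∀ v, H.degree v ≤ D) ∧
  ∀ U : Finset V, (U ⊆ V₁ ∨ U ⊆ V₂) → U.card ≤ 2 * m →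
    ((D : ℤ) - 1) * U.card - ∑ x ∈ U ∩ supportF H, ((H.degree x : ℤ) - 1)
      ≤ (((extNbhd G U) \ supportF H).card : ℤ)

open SimpleGraph

section SupEdge

variable {V : Type*} [Fintype V] {H : SimpleGraph V} {x y : V}

lemma mem_supportF_iff {v : V} : v ∈ supportF H ↔ ∃ u, H.Adj v u := by
  simp [supportF]

lemma not_adj_of_notMem_supportF (hy : y ∉ supportF H) (u : V) : ¬H.Adj y u :=
  fun h => hy (mem_supportF_iff.2 ⟨u, h⟩)

lemma supportF_sup_edge (hx : x ∈ supportF H) (hxy : x ≠ y) :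
    supportF (H ⊔ edge x y) = insert y (supportF H) := by
  ext v
  simp only [mem_supportF_iff, mem_insert, sup_adj, edge_adj]
  constructor
  · rintro ⟨u, hu | ⟨⟨rfl, rfl⟩ | ⟨rfl, rfl⟩, -⟩⟩
    exacts [Or.inr ⟨u, hu⟩, Or.inr (mem_supportF_iff.1 hx), Or.inl rfl]
  · rintro (rfl | ⟨u, hu⟩)
    exacts [⟨x, Or.inr ⟨Or.inr ⟨rfl, rfl⟩, hxy.symm⟩⟩, ⟨u, Or.inl hu⟩]

/- The `Fintype` instance is an implicit argument, not an instance argument, so that these lemmas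
also rewrite the degrees in `BipExtendable`, whose instances come from `Classical`. -/

lemma degree_sup_edge_of_ne (hy : y ∉ supportF H) {v : V} (hvy : v ≠ y)
    {_ : Fintype ((H ⊔ edge x y).neighborSet v)} :
    (H ⊔ edge x y).degree v = H.degree v + if v = x then 1 else 0 := by
  simp only [← card_neighborFinset_eq_degree]
  split_ifs with hvx
  · subst hvx
    have hN : (H ⊔ edge v y).neighborFinset v = insert y (H.neighborFinset v) := by
      ext u
      simp only [mem_neighborFinset, mem_insert, sup_adj, edge_adj]
      grind
    rw [hN, card_insert_of_notMem fun h =>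
      not_adj_of_notMem_supportF hy v ((mem_neighborFinset _ _ _).1 h).symm]
  · congr 1
    ext u
    simp only [mem_neighborFinset, sup_adj, edge_adj]
    grind

lemma degree_sup_edge_right (hy : y ∉ supportF H) (hxy : x ≠ y)
    {_ : Fintype ((H ⊔ edge x y).neighborSet y)} :
    (H ⊔ edge x y).degree y = 1 := by
  rw [← card_neighborFinset_eq_degree, card_eq_one]
  refine ⟨x, ext fun u => ?_⟩
  simp only [mem_neighborFinset, mem_singleton, sup_adj, edge_adj]
  have := not_adj_of_notMem_supportF hy u
  grind

def excess (H : SimpleGraph V) (U : Finset V) : ℤ :=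
  ∑ v ∈ U ∩ supportF H, ((H.degree v : ℤ) - 1)

lemma excess_sup_edge (hx : x ∈ supportF H) (hy : y ∉ supportF H) (hxy : x ≠ y)
    (U : Finset V) : excess (H ⊔ edge x y) U = excess H U + if x ∈ U then 1 else 0 := by
  have hshift : ∑ v ∈ U ∩ supportF H, (((H.degree v : ℤ) - 1) + if v = x then 1 else 0)
      = excess H U + if x ∈ U then 1 else 0 := by
    rw [sum_add_distrib, sum_ite_eq']
    simp [excess, hx]
  rw [← hshift, excess, supportF_sup_edge hx hxy,
    ← sum_subset (inter_subset_inter_left (subset_insert y _))]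
  · refine sum_congr rfl fun v hv => ?_
    have hvy : v ≠ y := by rintro rfl; exact hy (mem_inter.1 hv).2
    simp only [degree_sup_edge_of_ne hy hvy]
    push_cast
    ring
  · intro v hv hvS
    obtain rfl : v = y := by simp_all
    simp only [degree_sup_edge_right hy hxy, Nat.cast_one, sub_self]

lemma card_sdiff_supportF_sup_edge (hx : x ∈ supportF H) (hy : y ∉ supportF H) (hxy : x ≠ y)
    (A : Finset V) :
    (A \ supportF (H ⊔ edge x y)).card + (if y ∈ A then 1 else 0) = (A \ supportF H).card := by
  rw [supportF_sup_edge hx hxy, sdiff_insert]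
  split_ifs with hyA
  · exact card_erase_add_one (mem_sdiff.2 ⟨hyA, hy⟩)
  · rw [erase_eq_of_notMem fun h => hyA (mem_sdiff.1 h).1, add_zero]

end SupEdge

lemma mem_extNbhd_of_adj {V : Type*} [Fintype V] {G : SimpleGraph V} {U : Finset V} {u v : V}
    (hu : u ∈ U) (hv : v ∉ U) (huv : G.Adj u v) : v ∈ extNbhd G U := by
  simpa [extNbhd, hv] using ⟨u, hu, huv⟩

lemma notMem_of_adj_of_subset_part {V : Type*} {G : SimpleGraph V} {V₁ V₂ U : Finset V}
    (hdisj : Disjoint V₁ V₂)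
    (hbip : ∀ u v : V, G.Adj u v → (u ∈ V₁ ∧ v ∈ V₂) ∨ (u ∈ V₂ ∧ v ∈ V₁))
    (hU : U ⊆ V₁ ∨ U ⊆ V₂) {u v : V} (huv : G.Adj u v) (hu : u ∈ U) : v ∉ U := by
  intro hv
  have := disjoint_left.1 hdisj
  rcases hU with hU | hU <;> rcases hbip u v huv with h | h <;> grind

theorem stmt_13_general {V : Type*} [Fintype V] (G H : SimpleGraph V)
    (V₁ V₂ : Finset V) (D m : ℕ)
    (hdisj : Disjoint V₁ V₂)
    (hbip : ∀ u v : V, G.Adj u v → (u ∈ V₁ ∧ v ∈ V₂) ∨ (u ∈ V₂ ∧ v ∈ V₁))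
    (hΔ : ∀ v, H.degree v ≤ D)
    (x y : V) (hx : x ∈ supportF H) (hy : y ∉ supportF H) (hxy : G.Adj x y)
    (hext : BipExtendable G (H ⊔ SimpleGraph.fromEdgeSet {s(x, y)}) V₁ V₂ D m) :
    BipExtendable G H V₁ V₂ D m := by
  refine ⟨hΔ, fun U hU hUcard => ?_⟩
  have hne : x ≠ y := G.ne_of_adj hxy
  have hgain : (if x ∈ U then 1 else 0 : ℤ) ≤ if y ∈ extNbhd G U then 1 else 0 := by
    by_cases hxU : x ∈ U
    · have hyN := mem_extNbhd_of_adj hxU (notMem_of_adj_of_subset_part hdisj hbip hU hxy hxU) hxy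
      simp [hxU, hyN]
    · split_ifs <;> simp
  have hcard := card_sdiff_supportF_sup_edge hx hy hne (extNbhd G U)
  have key : ((D : ℤ) - 1) * U.card - excess (H ⊔ edge x y) U
      ≤ (extNbhd G U \ supportF (H ⊔ edge x y)).card := hext.2 U hU hUcard
  rw [excess_sup_edge hx hy hne] at key
  change _ - excess H U ≤ _
  zify at hcard
  linarith

theorem stmt_13 {V : Type*} [Fintype V] [DecidableEq V] (G H : SimpleGraph V)
    (V₁ V₂ : Finset V) (D m : ℕ) (hD : 3 ≤ D) (hm : 1 ≤ m)
    (hdisj : Disjoint V₁ V₂) (hunion : V₁ ∪ V₂ = Finset.univ)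
    (hbip : ∀ u v : V, G.Adj u v → (u ∈ V₁ ∧ v ∈ V₂) ∨ (u ∈ V₂ ∧ v ∈ V₁))
    (hHG : H ≤ G) (hΔ : ∀ v, H.degree v ≤ D)
    (x y : V) (hx : x ∈ supportF H) (hy : y ∉ supportF H) (hxy : G.Adj x y)
    (hext : BipExtendable G (H ⊔ SimpleGraph.fromEdgeSet {s(x, y)}) V₁ V₂ D m) :
    BipExtendable G H V₁ V₂ D m :=
  stmt_13_general G H V₁ V₂ D m hdisj hbip hΔ x y hx hy hxy hext
end
end

section
/- Let 0 < ε ≪ α, and let (A,B) be an (ε,p)-regular pair in a graph G with d_p(A,B) ≥ α and |A| = |B| = m sufficiently large. Then there exist A' ⊆ A and B' ⊆ B with |A'| = |B'| ≥ (1 − √ε)m such that every vertex of A' has at least αpm/3 neighbors in B' and every vertex of B' has at least αpm/3 neighbors in A'. -/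
open Finset
open scoped Classical
noncomputable section

def epairs {V : Type*} [Fintype V] (G : SimpleGraph V) (U W : Finset V) : ℕ :=
  ((U ×ˢ W).filter (fun p => G.Adj p.1 p.2)).card

def pDensity {V : Type*} [Fintype V] (G : SimpleGraph V) (p : ℝ) (A B : Finset V) : ℝ :=
  (epairs G A B : ℝ) / (p * A.card * B.card)

def RegularPair {V : Type*} [Fintype V] (G : SimpleGraph V) (ε p : ℝ) (A B : Finset V) :
    Prop :=
  ∀ A' ⊆ A, ∀ B' ⊆ B, ε * A.card ≤ (A'.card : ℝ) → ε * B.card ≤ (B'.card : ℝ) →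
    |(epairs G A' B' : ℝ) - pDensity G p A B * p * A'.card * B'.card|
      ≤ ε * p * A'.card * B'.card

/-!
Peel the pair greedily: while some surviving vertex has fewer than `αpm/3` neighbours among the
survivors on the other side, delete it, together with an arbitrary survivor of the other side so
that the sides stay equal. If this ran for `t = ⌈√ε m⌉` steps, one side would contain at least
`t/2 ≥ εm` deleted vertices, each with fewer than `αpm/3` neighbours among the `m - t ≥ (3/4)m - 1`
survivors of the other side; regularity gives that set at least `(α - ε)p(m - t)` such neighbours
on average, which is larger.
-/

theorem cast_card_inter_erase_le {α : Type*} [DecidableEq α] (N S : Finset α) (v : α) :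
    ((N ∩ S.erase v).card : ℝ) ≤ (N ∩ S).card := by
  exact_mod_cast card_le_card (inter_subset_inter_left (erase_subset v S))

variable {V : Type*} [Fintype V] (G : SimpleGraph V)

theorem epairs_comm (U W : Finset V) : epairs G U W = epairs G W U := by
  unfold epairs
  refine Finset.card_equiv (Equiv.prodComm V V) fun q => ?_
  simp [G.adj_comm, and_comm]

theorem epairs_eq_sum_card_neighborFinset_inter (U W : Finset V) :
    epairs G U W = ∑ u ∈ U, (G.neighborFinset u ∩ W).card := by
  unfold epairs
  rw [Finset.card_filter, Finset.sum_product]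
  refine Finset.sum_congr rfl fun u _ => ?_
  rw [← Finset.card_filter]
  congr 1
  ext w
  simp [and_comm]

theorem epairs_lt_of_forall_card_neighborFinset_inter_lt {U W : Finset V} {D : ℝ}
    (hU : U.Nonempty) (h : ∀ u ∈ U, ((G.neighborFinset u ∩ W).card : ℝ) < D) :
    (epairs G U W : ℝ) < D * U.card := by
  rw [epairs_eq_sum_card_neighborFinset_inter]
  push_cast
  calc ∑ u ∈ U, ((G.neighborFinset u ∩ W).card : ℝ) < ∑ _u ∈ U, D :=
        Finset.sum_lt_sum_of_nonempty hU h
    _ = D * U.card := by rw [Finset.sum_const, nsmul_eq_mul, mul_comm]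

theorem pDensity_comm (p : ℝ) (A B : Finset V) : pDensity G p B A = pDensity G p A B := by
  unfold pDensity
  rw [epairs_comm]
  ring

namespace RegularPair

variable {G} {ε p : ℝ} {A B : Finset V}

theorem symm (h : RegularPair G ε p A B) : RegularPair G ε p B A := by
  intro B' hB' A' hA' hB'c hA'c
  have := h A' hA' B' hB' hA'c hB'c
  rw [epairs_comm, pDensity_comm]
  convert this using 1 <;> ring_nf

theorem le_epairs (h : RegularPair G ε p A B) {X Y : Finset V} (hX : X ⊆ A) (hY : Y ⊆ B)
    (hXc : ε * A.card ≤ X.card) (hYc : ε * B.card ≤ Y.card) :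
    (pDensity G p A B - ε) * p * X.card * Y.card ≤ epairs G X Y := by
  have := (abs_le.mp (h X hX Y hY hXc hYc)).1
  linarith

end RegularPair

/-- After `t` peeling steps from `(A, B)`, the survivors are `A' ⊆ A`, `B' ⊆ B`, and `X ⊆ A`,
`Y ⊆ B` are the vertices deleted for their low degree; vertices deleted only to balance the sizes
are in neither. -/
structure Peeling (D : ℝ) (A B A' B' X Y : Finset V) (t : ℕ) : Prop where
  subset_left : A' ⊆ A
  subset_right : B' ⊆ B
  removed_subset_left : X ⊆ A
  removed_subset_right : Y ⊆ B
  disjoint_left : Disjoint X A'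
  disjoint_right : Disjoint Y B'
  card_left : A'.card + t = A.card
  card_right : B'.card + t = B.card
  card_removed : X.card + Y.card = t
  degree_left : ∀ x ∈ X, ((G.neighborFinset x ∩ B').card : ℝ) < D
  degree_right : ∀ y ∈ Y, ((G.neighborFinset y ∩ A').card : ℝ) < D

namespace Peeling

variable {G} {D : ℝ} {A B A' B' X Y : Finset V} {t : ℕ}

theorem zero (A B : Finset V) : Peeling G D A B A B ∅ ∅ 0 where
  subset_left := subset_rfl
  subset_right := subset_rfl
  removed_subset_left := empty_subset _
  removed_subset_right := empty_subset _
  disjoint_left := disjoint_empty_left _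
  disjoint_right := disjoint_empty_left _
  card_left := rfl
  card_right := rfl
  card_removed := rfl
  degree_left := by simp
  degree_right := by simp

theorem swap (h : Peeling G D A B A' B' X Y t) : Peeling G D B A B' A' Y X t where
  subset_left := h.subset_right
  subset_right := h.subset_left
  removed_subset_left := h.removed_subset_right
  removed_subset_right := h.removed_subset_left
  disjoint_left := h.disjoint_right
  disjoint_right := h.disjoint_left
  card_left := h.card_right
  card_right := h.card_left
  card_removed := (add_comm _ _).trans h.card_removed
  degree_left := h.degree_right
  degree_right := h.degree_left

theorem step_left (h : Peeling G D A B A' B' X Y t) {a b : V} (ha : a ∈ A') (hb : b ∈ B')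
    (hdeg : ((G.neighborFinset a ∩ B').card : ℝ) < D) :
    Peeling G D A B (A'.erase a) (B'.erase b) (insert a X) Y (t + 1) := by
  have haX : a ∉ X := Finset.disjoint_right.mp h.disjoint_left ha
  refine ⟨(erase_subset _ _).trans h.subset_left, (erase_subset _ _).trans h.subset_right,
    insert_subset (h.subset_left ha) h.removed_subset_left, h.removed_subset_right,
    disjoint_insert_left.mpr ⟨notMem_erase a A', h.disjoint_left.mono_right (erase_subset _ _)⟩,
    h.disjoint_right.mono_right (erase_subset _ _), ?_, ?_, ?_, ?_, ?_⟩
  · have := h.card_left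
    rw [card_erase_of_mem ha]
    have := card_pos.mpr ⟨a, ha⟩
    omega
  · have := h.card_right
    rw [card_erase_of_mem hb]
    have := card_pos.mpr ⟨b, hb⟩
    omega
  · rw [card_insert_of_notMem haX, ← h.card_removed]
    ring
  · intro x hx
    refine (cast_card_inter_erase_le _ _ b).trans_lt ?_
    rcases mem_insert.mp hx with rfl | hx
    · exact hdeg
    · exact h.degree_left x hx
  · exact fun y hy => (cast_card_inter_erase_le _ _ a).trans_lt (h.degree_right y hy)

theorem step_right (h : Peeling G D A B A' B' X Y t) {a b : V} (ha : a ∈ A') (hb : b ∈ B')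
    (hdeg : ((G.neighborFinset b ∩ A').card : ℝ) < D) :
    Peeling G D A B (A'.erase a) (B'.erase b) X (insert b Y) (t + 1) :=
  (h.swap.step_left hb ha hdeg).swap

theorem exists_minDegree_or_exists_peeling (hA : t ≤ A.card) (hB : t ≤ B.card) :
    (∃ s < t, ∃ A' B' X Y, Peeling G D A B A' B' X Y s ∧
      (∀ a ∈ A', D ≤ ((G.neighborFinset a ∩ B').card : ℝ)) ∧
      (∀ b ∈ B', D ≤ ((G.neighborFinset b ∩ A').card : ℝ))) ∨
    ∃ A' B' X Y, Peeling G D A B A' B' X Y t := by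
  induction t with
  | zero => exact Or.inr ⟨A, B, ∅, ∅, zero A B⟩
  | succ t ih =>
    rcases ih (by omega) (by omega) with ⟨s, hs, hgood⟩ | ⟨A', B', X, Y, h⟩
    · exact Or.inl ⟨s, by omega, hgood⟩
    obtain ⟨a, ha⟩ : A'.Nonempty := card_pos.mp (by have := h.card_left; omega)
    obtain ⟨b, hb⟩ : B'.Nonempty := card_pos.mp (by have := h.card_right; omega)
    by_cases hlowA : ∃ a ∈ A', ((G.neighborFinset a ∩ B').card : ℝ) < D
    · obtain ⟨a, ha, hdeg⟩ := hlowA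
      exact Or.inr ⟨_, _, _, _, h.step_left ha hb hdeg⟩
    by_cases hlowB : ∃ b ∈ B', ((G.neighborFinset b ∩ A').card : ℝ) < D
    · obtain ⟨b, hb, hdeg⟩ := hlowB
      exact Or.inr ⟨_, _, _, _, h.step_right ha hb hdeg⟩
    push Not at hlowA hlowB
    exact Or.inl ⟨t, t.lt_succ_self, A', B', X, Y, h, hlowA, hlowB⟩

end Peeling

namespace RegularPair

variable {G} {ε p D : ℝ} {A B A' B' X Y : Finset V} {t : ℕ}

theorem density_mul_card_lt_of_peeling (hreg : RegularPair G ε p A B)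
    (h : Peeling G D A B A' B' X Y t) (hX : X.Nonempty) (hXc : ε * A.card ≤ X.card)
    (hB'c : ε * B.card ≤ B'.card) :
    (pDensity G p A B - ε) * p * B'.card < D := by
  have hlow := hreg.le_epairs h.removed_subset_left h.subset_right hXc hB'c
  have hhigh := epairs_lt_of_forall_card_neighborFinset_inter_lt G hX h.degree_left
  have hXpos : (0 : ℝ) < X.card := by exact_mod_cast hX.card_pos
  exact lt_of_mul_lt_mul_right (by linarith) hXpos.le

theorem density_mul_lt_of_peeling {m : ℕ} (hreg : RegularPair G ε p A B) (hA : A.card = m)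
    (hB : B.card = m) (h : Peeling G D A B A' B' X Y t) (ht : 0 < t) (hεt : 2 * ε * m ≤ t)
    (hεm : ε * m ≤ m - t) :
    (pDensity G p A B - ε) * p * (m - t) < D := by
  wlog hXY : Y.card ≤ X.card generalizing A B A' B' X Y
  · rw [← pDensity_comm]
    exact this hreg.symm hB hA h.swap (by omega)
  have hXY' : (Y.card : ℝ) ≤ X.card := by exact_mod_cast hXY
  have hcard : (X.card : ℝ) + Y.card = t := by exact_mod_cast h.card_removed
  have hB' : (B'.card : ℝ) = m - t := by
    have : (B'.card : ℝ) + t = m := by exact_mod_cast hB ▸ h.card_right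
    linarith
  have hX : X.Nonempty := card_pos.mp (by have := h.card_removed; omega)
  rw [← hB']
  exact hreg.density_mul_card_lt_of_peeling h hX (by rw [hA]; linarith)
    (by rw [hB, hB']; exact hεm)

theorem not_peeling_ceil_sqrt_mul {α : ℝ} {m : ℕ} (hreg : RegularPair G ε p A B) (hα : 0 < α)
    (hp : 0 < p) (hd : α ≤ pDensity G p A B) (hε : 0 < ε) (hεα : ε ≤ α / 4) (hsqrt : √ε ≤ 1 / 4)
    (hm : 16 ≤ m) (hA : A.card = m) (hB : B.card = m) :
    ¬ Peeling G (α * p * m / 3) A B A' B' X Y ⌈√ε * m⌉₊ := by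
  intro h
  have hm : (16 : ℝ) ≤ m := by exact_mod_cast hm
  have hε_sqrt : 2 * ε ≤ √ε := by nlinarith [Real.sq_sqrt hε.le, Real.sqrt_nonneg ε]
  have ht_ge : √ε * m ≤ ⌈√ε * m⌉₊ := Nat.le_ceil _
  have ht_lt : (⌈√ε * m⌉₊ : ℝ) < √ε * m + 1 := Nat.ceil_lt_add_one (by positivity)
  have hlong := hreg.density_mul_lt_of_peeling hA hB h (Nat.ceil_pos.mpr (by positivity))
    (by nlinarith) (by nlinarith)
  have : 3 * α / 4 * p * (3 * m / 4 - 1) ≤ (pDensity G p A B - ε) * p * (m - ⌈√ε * m⌉₊) :=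
    mul_le_mul (mul_le_mul_of_nonneg_right (by linarith) hp.le) (by nlinarith) (by linarith)
      (by nlinarith)
  -- `(3α/4)(3m/4 - 1) ≥ αm/3` as soon as `m ≥ 4`
  nlinarith [mul_pos hα hp]

end RegularPair

theorem stmt_14 (α : ℝ) (hα : 0 < α) :
    ∃ ε₀ : ℝ, 0 < ε₀ ∧ ∀ ε : ℝ, 0 < ε → ε ≤ ε₀ →
      ∃ m₀ : ℕ, ∀ m : ℕ, m₀ ≤ m →
        ∀ (V : Type) [Fintype V], ∀ (G : SimpleGraph V) (p : ℝ) (A B : Finset V),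
          0 < p → Disjoint A B → A.card = m → B.card = m →
          RegularPair G ε p A B → α ≤ pDensity G p A B →
          ∃ A' B' : Finset V, A' ⊆ A ∧ B' ⊆ B ∧ A'.card = B'.card ∧
            (1 - Real.sqrt ε) * m ≤ (A'.card : ℝ) ∧
            (∀ a ∈ A', α * p * m / 3 ≤ ((G.neighborFinset a ∩ B').card : ℝ)) ∧
            (∀ b ∈ B', α * p * m / 3 ≤ ((G.neighborFinset b ∩ A').card : ℝ)) := by
  refine ⟨min (α / 4) (1 / 16), by positivity, fun ε hε hεle => ⟨16, fun m hm V _ G p A B hp _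
    hA hB hreg hd => ?_⟩⟩
  have hεα : ε ≤ α / 4 := hεle.trans (min_le_left _ _)
  have hsqrt : √ε ≤ 1 / 4 :=
    (Real.sqrt_le_left (by norm_num)).mpr (by linarith [hεle.trans (min_le_right _ _)])
  have htm : ⌈√ε * m⌉₊ ≤ m := Nat.ceil_le.mpr (by nlinarith [Real.sqrt_nonneg ε])
  rcases Peeling.exists_minDegree_or_exists_peeling (G := G) (D := α * p * m / 3)
      (htm.trans hA.ge) (htm.trans hB.ge)
    with ⟨s, hs, A', B', X, Y, h, hdegA, hdegB⟩ | ⟨A', B', X, Y, h⟩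
  · have hcard : A'.card = B'.card := by have := h.card_left; have := h.card_right; omega
    refine ⟨A', B', h.subset_left, h.subset_right, hcard, ?_, hdegA, hdegB⟩
    have : (A'.card : ℝ) + s = m := by exact_mod_cast hA ▸ h.card_left
    have : (s : ℝ) < √ε * m := Nat.lt_ceil.mp hs
    linarith
  · exact (hreg.not_peeling_ceil_sqrt_mul hα hp hd hε hεα hsqrt hm hA hB h).elim
end
end

section
/- Let γ_i = 4δ + M_i/(2βdn) and suppose a nonnegative real sequence (M_i) satisfies M_{i+1} ≤ M_i + 100·γ_i·log(1/γ_i)·n whenever M_i < β³dn, with M_0 = 0, where 0 < δ ≪ β < 1 and d is sufficiently large in terms of β and δ. Then the number of steps i before M_i reaches β³dn is at least c·βd·∑_{t=log(2/β²)}^{log(1/δ)} 1/t for an absolute constant c > 0; in particular, since δ ≪ β, the sequence remains below β³dn for more than d steps. -/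
open Finset
noncomputable section

private lemma harm_le (A : ℕ) (hA : 1 ≤ A) : ∀ B : ℕ, A ≤ B →
    ∑ t ∈ Finset.Icc A B, (1:ℝ)/t ≤ 1 + Real.log B - Real.log A := by
  intro B hAB
  induction B, hAB using Nat.le_induction with
  | base =>
      rw [Finset.Icc_self, Finset.sum_singleton]
      have hA' : (1:ℝ) ≤ (A:ℝ) := by exact_mod_cast hA
      have h1 : (1:ℝ)/A ≤ 1 := by
        rw [div_le_one (by linarith)]; linarith
      linarith
  | succ B hAB ih =>
      rw [Finset.sum_Icc_succ_top (hAB.trans (Nat.le_succ B))]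
      have hB0 : (0:ℝ) < (B:ℝ) := by
        have : (1:ℕ) ≤ B := hA.trans hAB
        exact_mod_cast this
      have hB1 : (0:ℝ) < (B:ℝ) + 1 := by linarith
      have hfrac : (0:ℝ) < (B:ℝ)/((B:ℝ)+1) := by positivity
      have h1 := Real.log_le_sub_one_of_pos hfrac
      rw [Real.log_div (ne_of_gt hB0) (ne_of_gt hB1)] at h1
      have heq : (B:ℝ)/((B:ℝ)+1) - 1 = -(1/((B:ℝ)+1)) := by field_simp; ring
      rw [heq] at h1
      have h2 : (1:ℝ)/((B:ℝ)+1) ≤ Real.log ((B:ℝ)+1) - Real.log B := by linarith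
      push_cast
      linarith

private lemma step_bound {a b ε L : ℝ} (ha : 0 < a) (hL : L = Real.log (1/a))
    (hLpos : 0 < L) (hε : 0 < ε) (hε2 : ε ≤ 1/2)
    (hb : 0 < b) (hble : b ≤ a * (1 + ε * L)) :
    Real.log L - Real.log (Real.log (1/b)) ≤ 2*ε := by
  have hεL : 0 < 1 + ε * L := by nlinarith
  have h1 : Real.log (1 + ε*L) ≤ ε*L := by
    have := Real.log_le_sub_one_of_pos hεL; linarith
  have hloga : Real.log a = -L := by
    rw [hL, Real.log_div one_ne_zero (ne_of_gt ha), Real.log_one]; ring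
  have hab : L - ε*L ≤ Real.log (1/b) := by
    have hba : Real.log b ≤ Real.log (a*(1+ε*L)) := Real.log_le_log hb hble
    rw [Real.log_mul (ne_of_gt ha) (ne_of_gt hεL)] at hba
    have hlb : Real.log (1/b) = -Real.log b := by
      rw [Real.log_div one_ne_zero (ne_of_gt hb), Real.log_one]; ring
    rw [hlb]; linarith
  have hpos : 0 < L - ε*L := by nlinarith
  have h2 : Real.log (L - ε*L) ≤ Real.log (Real.log (1/b)) := Real.log_le_log hpos hab
  have hone : (0:ℝ) < 1 - ε := by linarith
  have h3 : Real.log (L - ε*L) = Real.log L + Real.log (1-ε) := by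
    rw [show L - ε*L = L*(1-ε) by ring, Real.log_mul (ne_of_gt hLpos) (ne_of_gt hone)]
  have h4 : -Real.log (1-ε) ≤ 2*ε := by
    have hexp : Real.exp (-(2*ε)) ≤ 1 - ε := by
      have h5 : 2*ε + 1 ≤ Real.exp (2*ε) := Real.add_one_le_exp _
      have hp : 0 < Real.exp (2*ε) := Real.exp_pos _
      have hm : Real.exp (-(2*ε)) * Real.exp (2*ε) = 1 := by
        rw [← Real.exp_add]; simp
      nlinarith [Real.exp_pos (-(2*ε))]
    have := Real.log_le_log (Real.exp_pos _) hexp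
    rw [Real.log_exp] at this
    linarith
  linarith

set_option maxHeartbeats 1600000 in
theorem stmt_19 :
    ∃ c : ℝ, 0 < c ∧
      ∀ β : ℝ, 0 < β → β < 1 →
        ∃ δ₀ : ℝ, 0 < δ₀ ∧
          ∀ δ : ℝ, 0 < δ → δ ≤ δ₀ →
            ∃ d₀ : ℕ, ∀ d : ℕ, d₀ ≤ d → ∀ n : ℕ, 0 < n →
              ∀ M : ℕ → ℝ, M 0 = 0 → (∀ i, 0 ≤ M i) →
                (∀ i : ℕ, M i < β ^ 3 * d * n →
                  M (i + 1) ≤ M i +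
                    100 * (4 * δ + M i / (2 * β * d * n)) *
                      Real.log (1 / (4 * δ + M i / (2 * β * d * n))) * n) →
                (∀ i : ℕ,
                    (i : ℝ) ≤ c * β * d *
                        ∑ t ∈ Finset.Icc (⌈Real.logb 2 (2 / β ^ 2)⌉₊)
                          (⌊Real.logb 2 (1 / δ)⌋₊), (1 : ℝ) / t →
                    M i < β ^ 3 * d * n) ∧
                  (∀ i : ℕ, i ≤ d → M i < β ^ 3 * d * n) := by
  refine ⟨1/200, by norm_num, ?_⟩
  intro β hβ0 hβ1
  refine ⟨Real.exp (-(Real.log (2/β^2) * Real.exp (200/β))), Real.exp_pos _, ?_⟩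
  intro δ hδ0 hδδ₀
  refine ⟨⌈(100*(Real.log (1/(4*δ)) + 1))/β⌉₊ + 1, ?_⟩
  intro d hd n hn M hM0 hMnn hrec
  -- basic positivity
  have hβ2 : (0:ℝ) < β^2 := by positivity
  have hβ21 : β^2 < 1 := by nlinarith [hβ0, hβ1]
  have h2β : (1:ℝ) < 2/β^2 := by rw [lt_div_iff₀ hβ2]; linarith only [hβ21]
  have hlog2' : (0:ℝ) < Real.log 2 := Real.log_pos one_lt_two
  have hlog2β : 0 < Real.log (2/β^2) := Real.log_pos h2β
  have hlog2βge : Real.log 2 ≤ Real.log (2/β^2) := by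
    apply Real.log_le_log (by norm_num)
    rw [le_div_iff₀ hβ2]; linarith only [hβ21]
  have hexp200 : (200:ℝ) ≤ Real.exp (200/β) := by
    have h1 : (200:ℝ) ≤ 200/β := by
      rw [le_div_iff₀ hβ0]; linarith only [hβ1, hβ0]
    have := Real.add_one_le_exp (200/β)
    linarith only [h1, this]
  have hl2gt : (0.6931471803:ℝ) < Real.log 2 := Real.log_two_gt_d9
  have hK : (100:ℝ) ≤ Real.log (2/β^2) * Real.exp (200/β) := by
    nlinarith only [hlog2βge, hl2gt, hexp200, Real.exp_pos (200/β)]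
  -- δ is tiny
  have hδ101 : δ ≤ 1/101 := by
    have h1 : Real.exp (-(Real.log (2/β^2) * Real.exp (200/β))) ≤ Real.exp (-100) :=
      Real.exp_le_exp.2 (by linarith only [hK])
    have h2 : Real.exp (-100 : ℝ) ≤ 1/101 := by
      have h3 : (100:ℝ) + 1 ≤ Real.exp 100 := Real.add_one_le_exp 100
      have h4 : Real.exp (-100 : ℝ) * Real.exp (100:ℝ) = 1 := by
        rw [← Real.exp_add]; simp
      nlinarith only [h3, h4, Real.exp_pos (-100 : ℝ), Real.exp_pos (100 : ℝ)]
    linarith only [h1, h2, hδδ₀]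
  have h4δ : (0:ℝ) < 4*δ := by linarith only [hδ0]
  have h4δ16 : 4*δ ≤ 1/16 := by linarith only [hδ101]
  have hlog4δ : 0 < Real.log (1/(4*δ)) := by
    apply Real.log_pos
    rw [lt_div_iff₀ h4δ]; linarith only [h4δ16]
  -- Λ = log(1/δ)
  obtain ⟨Λ, hΛdef⟩ : ∃ y : ℝ, y = Real.log (1/δ) := ⟨_, rfl⟩
  have hΛinv : Λ = -Real.log δ := by rw [hΛdef, one_div, Real.log_inv]
  have hΛK : Real.log (2/β^2) * Real.exp (200/β) ≤ Λ := by
    set K : ℝ := Real.log (2/β^2) * Real.exp (200/β) with hKdef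
    rw [hΛdef]
    have h1δ : Real.exp K ≤ 1/δ := by
      rw [le_div_iff₀ hδ0]
      have h2 : Real.exp K * δ ≤ Real.exp K * Real.exp (-K) := by
        apply mul_le_mul_of_nonneg_left hδδ₀ (le_of_lt (Real.exp_pos K))
      have h3 : Real.exp K * Real.exp (-K) = 1 := by rw [← Real.exp_add]; simp
      linarith only [h2, h3]
    have := Real.log_le_log (Real.exp_pos K) h1δ
    rwa [Real.log_exp] at this
  have hΛ100 : (100:ℝ) ≤ Λ := le_trans hK hΛK
  have hΛpos : (0:ℝ) < Λ := by linarith only [hΛ100]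
  -- X
  obtain ⟨X, hXdef⟩ : ∃ y : ℝ, y = Real.log Λ - Real.log (Real.log (2/β^2)) := ⟨_, rfl⟩
  have hX : 200/β ≤ X := by
    have hKpos : 0 < Real.log (2/β^2) * Real.exp (200/β) := by positivity
    have h1 : Real.log (Real.log (2/β^2) * Real.exp (200/β)) ≤ Real.log Λ :=
      Real.log_le_log hKpos hΛK
    rw [Real.log_mul (ne_of_gt hlog2β) (ne_of_gt (Real.exp_pos _)), Real.log_exp] at h1
    rw [hXdef]
    linarith only [h1]
  have hβX : (200:ℝ) ≤ 200/β := by rw [le_div_iff₀ hβ0]; linarith only [hβ1, hβ0]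
  -- D
  obtain ⟨D, hDdef⟩ : ∃ y : ℝ,
      y = Real.log (Real.log (1/(4*δ))) - Real.log (Real.log (16/β^2)) := ⟨_, rfl⟩
  have hlog4 : Real.log 4 = 2 * Real.log 2 := by
    rw [show (4:ℝ) = 2^2 by norm_num, Real.log_pow]; push_cast; ring
  have hlog8 : Real.log 8 = 3 * Real.log 2 := by
    rw [show (8:ℝ) = 2^3 by norm_num, Real.log_pow]; push_cast; ring
  have hl2lt : Real.log 2 < 0.6931471808 := Real.log_two_lt_d9
  have hD1 : Real.log Λ - Real.log 2 ≤ Real.log (Real.log (1/(4*δ))) := by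
    have he : Real.log (1/(4*δ)) = Λ - Real.log 4 := by
      rw [one_div, Real.log_inv, Real.log_mul (by norm_num) (ne_of_gt hδ0), hΛinv]; ring
    have h1 : Λ/2 ≤ Real.log (1/(4*δ)) := by
      rw [he, hlog4]; linarith only [hΛ100, hl2lt]
    have h2 := Real.log_le_log (by positivity) h1
    rw [Real.log_div (ne_of_gt hΛpos) (by norm_num)] at h2
    linarith only [h2]
  have hD2 : Real.log (Real.log (16/β^2)) ≤ Real.log (Real.log (2/β^2)) + Real.log 4 := by
    have he : Real.log (16/β^2) = Real.log (2/β^2) + Real.log 8 := by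
      rw [show (16:ℝ)/β^2 = (2/β^2) * 8 by ring,
        Real.log_mul (ne_of_gt (by positivity : (0:ℝ) < 2/β^2)) (by norm_num)]
    have h1 : Real.log (16/β^2) ≤ 4 * Real.log (2/β^2) := by
      rw [he, hlog8]; linarith only [hlog2βge]
    have h16 : (0:ℝ) < Real.log (16/β^2) := by
      apply Real.log_pos; rw [lt_div_iff₀ hβ2]; linarith only [hβ21]
    have h2 := Real.log_le_log h16 h1
    rw [Real.log_mul (by norm_num) (ne_of_gt hlog2β), hlog4] at h2
    linarith only [h2, hlog4]
  have hD : X - 3 ≤ D := by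
    rw [hDdef, hXdef]
    linarith only [hD1, hD2, hlog4, hl2lt, hl2gt]
  have hβ100 : (100:ℝ) ≤ 100/β := by rw [le_div_iff₀ hβ0]; linarith only [hβ1, hβ0]
  have hD100 : 100/β ≤ D := by
    have : 200/β - 3 ≤ D := by linarith only [hD, hX]
    have h2 : 100/β + 100/β = 200/β := by ring
    linarith only [this, h2, hβ100]
  have hX200 : (200:ℝ) ≤ X := le_trans hβX hX
  have hD197 : (197:ℝ) ≤ D := by linarith only [hD, hX200]
  -- d largeness
  have hdd : ((⌈(100*(Real.log (1/(4*δ)) + 1))/β⌉₊ : ℕ) : ℝ) ≤ (d:ℝ) := by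
    exact_mod_cast Nat.le_of_succ_le hd
  have hdbig : 100*(Real.log (1/(4*δ)) + 1) ≤ β * d := by
    have h1 := Nat.le_ceil ((100*(Real.log (1/(4*δ)) + 1))/β)
    have h2 : (100*(Real.log (1/(4*δ)) + 1))/β ≤ (d:ℝ) := le_trans h1 hdd
    rw [div_le_iff₀ hβ0] at h2
    linarith only [h2]
  have hd1 : 1 ≤ d := le_trans (Nat.le_add_left 1 _) hd
  have hdpos : (0:ℝ) < (d:ℝ) := by exact_mod_cast hd1
  have hnpos : (0:ℝ) < (n:ℝ) := by exact_mod_cast hn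
  have hbd : (0:ℝ) < β * d := by positivity
  have hbd100 : (100:ℝ) ≤ β * d := by linarith only [hdbig, hlog4δ]
  have hP : (0:ℝ) < 2*β*(d:ℝ)*(n:ℝ) := by positivity
  have hbdn : (0:ℝ) < β^3*(d:ℝ)*(n:ℝ) := by positivity
  have hβne : β ≠ 0 := ne_of_gt hβ0
  have hdne : (d:ℝ) ≠ 0 := ne_of_gt hdpos
  have hnne : (n:ℝ) ≠ 0 := ne_of_gt hnpos
  have hε : (0:ℝ) < 50/(β*d) := by positivity
  have hε2 : 50/(β*(d:ℝ)) ≤ 1/2 := by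
    rw [div_le_iff₀ hbd]; linarith only [hbd100]
  have hεL' : (50/(β*(d:ℝ))) * Real.log (1/(4*δ)) ≤ 1/2 := by
    rw [div_mul_eq_mul_div, div_le_iff₀ hbd]; linarith only [hdbig, hlog4δ]
  -- main induction
  have key : ∀ i : ℕ, (i:ℝ) ≤ β*(d:ℝ)*D/100 →
      M i < β^3*(d:ℝ)*(n:ℝ)/8 ∧
      Real.log (Real.log (1/(4*δ))) -
        Real.log (Real.log (1/(4*δ + M i/(2*β*(d:ℝ)*(n:ℝ))))) ≤ 100*(i:ℝ)/(β*(d:ℝ)) := by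
    intro i
    induction i with
    | zero =>
        intro _
        constructor
        · rw [hM0]; linarith only [hbdn]
        · rw [hM0]; simp
    | succ i ih =>
        intro hle
        have hle' : (i:ℝ) ≤ β*(d:ℝ)*D/100 := by
          have : (i:ℝ) ≤ (i:ℝ) + 1 := by linarith
          push_cast at hle; linarith only [hle]
        obtain ⟨hMi, hgi⟩ := ih hle'
        obtain ⟨a, hadef⟩ : ∃ y : ℝ, y = 4*δ + M i/(2*β*(d:ℝ)*(n:ℝ)) := ⟨_, rfl⟩
        rw [← hadef] at hgi
        have hMiP : 0 ≤ M i/(2*β*(d:ℝ)*(n:ℝ)) := div_nonneg (hMnn i) (le_of_lt hP)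
        have ha0 : 0 < a := by rw [hadef]; linarith only [h4δ, hMiP]
        have haP : M i/(2*β*(d:ℝ)*(n:ℝ)) < β^2/16 := by
          rw [div_lt_iff₀ hP]
          have he : β^2/16*(2*β*(d:ℝ)*(n:ℝ)) = β^3*(d:ℝ)*(n:ℝ)/8 := by ring
          linarith only [hMi, he]
        have ha18 : a ≤ 1/8 := by rw [hadef]; linarith only [haP, h4δ16, hβ21]
        obtain ⟨L, hLdef⟩ : ∃ y : ℝ, y = Real.log (1/a) := ⟨_, rfl⟩
        rw [← hLdef] at hgi
        have hLpos : 0 < L := by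
          rw [hLdef]; apply Real.log_pos; rw [lt_div_iff₀ ha0]; linarith only [ha18]
        have hLle : L ≤ Real.log (1/(4*δ)) := by
          rw [hLdef]
          apply Real.log_le_log (by positivity)
          apply one_div_le_one_div_of_le h4δ
          rw [hadef]; linarith only [hMiP]
        have hεL2 : (50/(β*(d:ℝ))) * L ≤ 1/2 := by
          have := mul_le_mul_of_nonneg_left hLle (le_of_lt hε)
          linarith only [this, hεL']
        have hrec' := hrec i (by linarith only [hMi, hbdn])
        rw [← hadef, ← hLdef] at hrec'
        obtain ⟨b, hbdef⟩ : ∃ y : ℝ, y = 4*δ + M (i+1)/(2*β*(d:ℝ)*(n:ℝ)) := ⟨_, rfl⟩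
        have hb0 : 0 < b := by
          rw [hbdef]
          have := div_nonneg (hMnn (i+1)) (le_of_lt hP)
          linarith only [this, h4δ]
        have hble : b ≤ a*(1 + (50/(β*(d:ℝ)))*L) := by
          have h1 : M (i+1)/(2*β*(d:ℝ)*(n:ℝ)) ≤
              (M i + 100*a*L*(n:ℝ))/(2*β*(d:ℝ)*(n:ℝ)) :=
            div_le_div_of_nonneg_right hrec' (le_of_lt hP)
          have h2 : (M i + 100*a*L*(n:ℝ))/(2*β*(d:ℝ)*(n:ℝ)) =
              M i/(2*β*(d:ℝ)*(n:ℝ)) + a*L*(50/(β*(d:ℝ))) := by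
            field_simp
            ring
          have h3 : a*(1 + (50/(β*(d:ℝ)))*L) = a + a*L*(50/(β*(d:ℝ))) := by ring
          rw [h3, hbdef]
          rw [h2] at h1
          linarith only [h1, hadef]
        have hstep := step_bound ha0 hLdef hLpos hε hε2 hb0 hble
        have hg1 : Real.log (Real.log (1/(4*δ))) - Real.log (Real.log (1/b)) ≤
            100*((i:ℝ)+1)/(β*(d:ℝ)) := by
          have he : (2:ℝ)*(50/(β*(d:ℝ))) = 100/(β*(d:ℝ)) := by ring
          rw [he] at hstep
          have : 100*((i:ℝ)+1)/(β*(d:ℝ)) = 100*(i:ℝ)/(β*(d:ℝ)) + 100/(β*(d:ℝ)) := by ring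
          rw [this]
          linarith only [hgi, hstep]
        have hDle : 100*((i:ℝ)+1)/(β*(d:ℝ)) ≤ D := by
          rw [div_le_iff₀ hbd]
          push_cast at hle
          linarith only [hle]
        have hloglogb : Real.log (Real.log (16/β^2)) ≤ Real.log (Real.log (1/b)) := by
          rw [hDdef] at hDle
          linarith only [hg1, hDle]
        have h16β : (1:ℝ) < 16/β^2 := by rw [lt_div_iff₀ hβ2]; linarith only [hβ21]
        have hlog16 : 0 < Real.log (16/β^2) := Real.log_pos h16β
        have hb316 : b ≤ 3/16 := by
          have hεLnn : 0 ≤ (50/(β*(d:ℝ)))*L := mul_nonneg (le_of_lt hε) (le_of_lt hLpos)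
          have h1 : a*(1 + (50/(β*(d:ℝ)))*L) ≤ (1/8)*(3/2) := by
            apply mul_le_mul ha18 (by linarith only [hεL2]) (by linarith only [hεLnn]) (by norm_num)
          linarith only [hble, h1]
        have hlogb : 0 < Real.log (1/b) := by
          apply Real.log_pos; rw [lt_div_iff₀ hb0]; linarith only [hb316]
        have h1 : Real.log (16/β^2) ≤ Real.log (1/b) :=
          (Real.log_le_log_iff hlog16 hlogb).1 hloglogb
        have h2 : 16/β^2 ≤ 1/b :=
          (Real.log_le_log_iff (by positivity) (by positivity)).1 h1
        have h3 : b ≤ β^2/16 := by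
          rw [div_le_div_iff₀ hβ2 hb0] at h2
          linarith only [h2]
        have hM1 : M (i+1) < β^3*(d:ℝ)*(n:ℝ)/8 := by
          have h4 : M (i+1)/(2*β*(d:ℝ)*(n:ℝ)) < β^2/16 := by
            have h5 : M (i+1)/(2*β*(d:ℝ)*(n:ℝ)) = b - 4*δ := by rw [hbdef]; ring
            rw [h5]; linarith only [h3, hδ0]
          rw [div_lt_iff₀ hP] at h4
          have he : β^2/16*(2*β*(d:ℝ)*(n:ℝ)) = β^3*(d:ℝ)*(n:ℝ)/8 := by ring
          linarith only [h4, he]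
        refine ⟨hM1, ?_⟩
        rw [← hbdef]
        push_cast
        exact hg1
  -- conclusions
  have hT : β^3*(d:ℝ)*(n:ℝ)/8 < β^3*(d:ℝ)*(n:ℝ) := by linarith only [hbdn]
  constructor
  · intro i hi
    obtain ⟨A, hAdef⟩ : ∃ y : ℕ, y = ⌈Real.logb 2 (2/β^2)⌉₊ := ⟨_, rfl⟩
    obtain ⟨B, hBdef⟩ : ∃ y : ℕ, y = ⌊Real.logb 2 (1/δ)⌋₊ := ⟨_, rfl⟩
    rw [← hAdef, ← hBdef] at hi
    have hA1 : 1 ≤ A := by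
      rw [hAdef]
      apply Nat.ceil_pos.2
      rw [Real.logb]
      exact div_pos hlog2β hlog2'
    have hS : ∑ t ∈ Finset.Icc A B, (1:ℝ)/t ≤ 2*D := by
      by_cases hAB : A ≤ B
      · have hsum := harm_le A hA1 B hAB
        have hB1 : (1:ℝ) ≤ (B:ℝ) := by exact_mod_cast hA1.trans hAB
        have hBle : (B:ℝ) ≤ Λ/Real.log 2 := by
          have h0 : 0 ≤ Real.logb 2 (1/δ) := by
            rw [Real.logb, ← hΛdef]
            exact div_nonneg (le_of_lt hΛpos) (le_of_lt hlog2')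
          have h1 := Nat.floor_le h0
          rw [Real.logb] at h1
          rw [hBdef, hΛdef]
          exact h1
        have hlogB : Real.log B ≤ Real.log Λ - Real.log (Real.log 2) := by
          have h1 := Real.log_le_log (by linarith only [hB1]) hBle
          rwa [Real.log_div (ne_of_gt hΛpos) (ne_of_gt hlog2')] at h1
        have hAge : Real.log (2/β^2)/Real.log 2 ≤ (A:ℝ) := by
          have h1 := Nat.le_ceil (Real.logb 2 (2/β^2))
          rw [Real.logb] at h1
          rw [hAdef]
          exact h1
        have hlogA : Real.log (Real.log (2/β^2)) - Real.log (Real.log 2) ≤ Real.log A := by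
          have h1 := Real.log_le_log (div_pos hlog2β hlog2') hAge
          rwa [Real.log_div (ne_of_gt hlog2β) (ne_of_gt hlog2')] at h1
        have hXD : X ≤ D + 3 := by linarith only [hD]
        rw [hXdef] at hXD
        linarith only [hsum, hlogB, hlogA, hD197, hXD]
      · push_neg at hAB
        rw [Finset.Icc_eq_empty (by omega)]
        simp
        linarith only [hD197]
    have hi' : (i:ℝ) ≤ β*(d:ℝ)*D/100 := by
      have h1 : (i:ℝ) ≤ 1/200*β*(d:ℝ)*(2*D) := by
        calc (i:ℝ) ≤ 1/200*β*(d:ℝ)*∑ t ∈ Finset.Icc A B, (1:ℝ)/t := hi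
          _ ≤ 1/200*β*(d:ℝ)*(2*D) := by
              apply mul_le_mul_of_nonneg_left hS (by positivity)
      linarith only [h1]
    exact lt_trans (key i hi').1 hT
  · intro i hid
    have hi' : (i:ℝ) ≤ β*(d:ℝ)*D/100 := by
      have h1 : (i:ℝ) ≤ (d:ℝ) := by exact_mod_cast hid
      have h2 : (d:ℝ) ≤ β*(d:ℝ)*D/100 := by
        rw [le_div_iff₀ (by norm_num : (0:ℝ) < 100)]
        have h3 : β * (100/β) ≤ β * D := mul_le_mul_of_nonneg_left hD100 (le_of_lt hβ0)
        have h4 : β * (100/β) = 100 := by field_simp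
        have h5 : (100:ℝ) ≤ β * D := by linarith only [h3, h4]
        have h6 := mul_le_mul_of_nonneg_left h5 (le_of_lt hdpos)
        linarith only [h6]
      linarith only [h1, h2]
    exact lt_trans (key i hi').1 hT
end
end
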